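/- The ridge polynomials φ̃_{n,k}(x) = (1/√π) U_n(x₁ cos(kh) + x₂ sin(kh)), h = π/(n+1), k = 0,…,n, where U_n is the Chebyshev polynomial of the second kind of degree n, form an orthonormal family in L²(B_2) with respect to the standard inner product on the unit disk. -/

import Mathlib

/-!
Rotating the disk by `k h` reduces the inner product of the `k`-th and `l`-th ridge polynomials
to `π⁻¹ ∫_B U_n(x₁) U_n(x₁ cos γ + x₂ sin γ) dx` with `γ = (l - k) h`. Integrate first along the
chord `x₁ = cos u`, of half-length `sin u`. Since `T_{n+1}' = (n + 1) U_n`, the inner integral is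
`(T_{n+1}(cos (u - γ)) - T_{n+1}(cos (u + γ))) / ((n + 1) sin γ)`, that is
`2 sin ((n + 1) u) sin ((n + 1) γ) / ((n + 1) sin γ)`, which vanishes for `k ≠ l` because
`(n + 1) γ` is a multiple of `π` while `γ` is not. For `k = l` the substitution `x₁ = cos u` and
`U_n(cos u) sin u = sin ((n + 1) u)` turn the integral into `2 ∫_0^π sin² ((n + 1) u) du = π`.
-/

open Real MeasureTheory Polynomial Polynomial.Chebyshev Set

def unitDisk : Set (ℝ × ℝ) := {p | p.1 ^ 2 + p.2 ^ 2 < 1}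

lemma measurableSet_unitDisk : MeasurableSet unitDisk :=
  (isOpen_lt (by fun_prop) continuous_const).measurableSet

lemma unitDisk_subset_Icc_prod_Icc : unitDisk ⊆ Icc (-1) 1 ×ˢ Icc (-1) 1 := by
  rintro ⟨x, y⟩ h
  change x ^ 2 + y ^ 2 < 1 at h
  exact ⟨⟨by nlinarith, by nlinarith⟩, ⟨by nlinarith, by nlinarith⟩⟩

lemma setOf_sq_add_sq_lt_one (x : ℝ) :
    {y : ℝ | x ^ 2 + y ^ 2 < 1} = Ioo (-√(1 - x ^ 2)) √(1 - x ^ 2) := by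
  ext y
  change x ^ 2 + y ^ 2 < 1 ↔ _
  rw [mem_Ioo, ← abs_lt, lt_sqrt (abs_nonneg y), sq_abs]
  constructor <;> intro h <;> linarith

lemma setIntegral_unitBall_eq_setIntegral_unitDisk (f : ℝ → ℝ → ℝ) :
    ∫ x in Metric.ball (0 : EuclideanSpace ℝ (Fin 2)) 1, f (x 0) (x 1)
      = ∫ p in unitDisk, f p.1 p.2 := by
  let ψ : ℝ × ℝ ≃ᵐ EuclideanSpace ℝ (Fin 2) :=
    MeasurableEquiv.finTwoArrow.symm.trans (MeasurableEquiv.toLp 2 (Fin 2 → ℝ))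
  have hψ : MeasurePreserving ψ volume volume :=
    (EuclideanSpace.volume_preserving_symm_measurableEquiv_toLp (Fin 2)).symm.comp
      (volume_preserving_finTwoArrow ℝ).symm
  have hpre : ψ ⁻¹' Metric.ball 0 1 = unitDisk := by
    ext p
    rw [mem_preimage, mem_ball_zero_iff, EuclideanSpace.norm_eq, sqrt_lt' one_pos, one_pow]
    simp [ψ, unitDisk]
  rw [← hψ.setIntegral_preimage_emb ψ.measurableEmbedding, hpre]
  rfl

lemma setIntegral_unitDisk_eq_intervalIntegral {F : ℝ → ℝ → ℝ}
    (hF : Continuous (Function.uncurry F)) :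
    ∫ p in unitDisk, F p.1 p.2 = ∫ x in -1..1, ∫ y in -√(1 - x ^ 2)..√(1 - x ^ 2), F x y := by
  have hint : Integrable (unitDisk.indicator (Function.uncurry F)) (volume.prod volume) := by
    rw [integrable_indicator_iff measurableSet_unitDisk, ← Measure.volume_eq_prod]
    exact (hF.continuousOn.integrableOn_compact (isCompact_Icc.prod isCompact_Icc)).mono_set
      unitDisk_subset_Icc_prod_Icc
  have hsection : ∀ x, ∫ y, unitDisk.indicator (Function.uncurry F) (x, y)
      = ∫ y in -√(1 - x ^ 2)..√(1 - x ^ 2), F x y := by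
    intro x
    rw [intervalIntegral.integral_of_le (neg_le_self (sqrt_nonneg _)), integral_Ioc_eq_integral_Ioo,
      ← setOf_sq_add_sq_lt_one, ← integral_indicator (measurableSet_lt (by fun_prop) (by fun_prop))]
    rfl
  have houter : ∀ x ∉ Ioc (-1 : ℝ) 1, ∫ y in -√(1 - x ^ 2)..√(1 - x ^ 2), F x y = 0 := by
    intro x hx
    have hneg : 1 - x ^ 2 ≤ 0 := by
      simp only [mem_Ioc, not_and_or, not_lt, not_le] at hx
      rcases hx with hx | hx <;> nlinarith
    simp [sqrt_eq_zero'.mpr hneg]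
  change ∫ p in unitDisk, Function.uncurry F p = _
  rw [← integral_indicator measurableSet_unitDisk, Measure.volume_eq_prod, integral_prod _ hint]
  simp_rw [hsection]
  rw [intervalIntegral.integral_of_le (by norm_num),
    setIntegral_eq_integral_of_forall_compl_eq_zero houter]

lemma setIntegral_unitBall_eq_intervalIntegral (F : ℝ → ℝ → ℝ)
    (hF : Continuous (Function.uncurry F)) :
    ∫ x in Metric.ball (0 : EuclideanSpace ℝ (Fin 2)) 1, F (x 0) (x 1)
      = ∫ x in -1..1, ∫ y in -√(1 - x ^ 2)..√(1 - x ^ 2), F x y :=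
  (setIntegral_unitBall_eq_setIntegral_unitDisk F).trans
    (setIntegral_unitDisk_eq_intervalIntegral hF)

noncomputable def planeRotation (a : ℝ) :
    EuclideanSpace ℝ (Fin 2) ≃ₗᵢ[ℝ] EuclideanSpace ℝ (Fin 2) :=
  (Complex.orthonormalBasisOneI.repr.symm.trans (rotation (Circle.exp a))).trans
    Complex.orthonormalBasisOneI.repr

lemma planeRotation_apply_zero (a : ℝ) (x : EuclideanSpace ℝ (Fin 2)) :
    planeRotation a x 0 = cos a * x 0 - sin a * x 1 := by
  simp [planeRotation, Complex.orthonormalBasisOneI_repr_symm_apply]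

lemma planeRotation_apply_one (a : ℝ) (x : EuclideanSpace ℝ (Fin 2)) :
    planeRotation a x 1 = sin a * x 0 + cos a * x 1 := by
  simp [planeRotation, Complex.orthonormalBasisOneI_repr_symm_apply, add_comm]

lemma setIntegral_ball_comp_linearIsometryEquiv {E : Type*} [NormedAddCommGroup E]
    [InnerProductSpace ℝ E] [FiniteDimensional ℝ E] [MeasurableSpace E] [BorelSpace E]
    (R : E ≃ₗᵢ[ℝ] E) (f : E → ℝ) (r : ℝ) :
    ∫ x in Metric.ball 0 r, f (R x) = ∫ x in Metric.ball 0 r, f x := by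
  have h := R.measurePreserving.setIntegral_preimage_emb
    R.toHomeomorph.measurableEmbedding f (Metric.ball 0 r)
  rwa [R.preimage_ball, map_zero] at h

lemma setIntegral_unitBall_ridge_mul_ridge (f : ℝ → ℝ → ℝ) (a b : ℝ) :
    ∫ x in Metric.ball (0 : EuclideanSpace ℝ (Fin 2)) 1,
        f (x 0 * cos a + x 1 * sin a) (x 0 * cos b + x 1 * sin b)
      = ∫ x in Metric.ball (0 : EuclideanSpace ℝ (Fin 2)) 1,
        f (x 0) (x 0 * cos (b - a) + x 1 * sin (b - a)) := by
  rw [← setIntegral_ball_comp_linearIsometryEquiv (planeRotation a)]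
  congr 1; funext x
  simp only [planeRotation_apply_zero, planeRotation_apply_one, cos_sub, sin_sub]
  congr 1
  · linear_combination x 0 * sin_sq_add_cos_sq a
  · ring

lemma integral_eval_chebyshevU (m : ℕ) (a b : ℝ) :
    ∫ t in a..b, (U ℝ m).eval t = ((T ℝ (m + 1)).eval b - (T ℝ (m + 1)).eval a) / (m + 1) := by
  have hderiv : ∀ t, (T ℝ (m + 1)).derivative.eval t = (m + 1) * (U ℝ m).eval t := by
    intro t
    simp [T_derivative_eq_U]
  rw [eq_div_iff (by positivity), mul_comm, ← intervalIntegral.integral_const_mul]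
  simp_rw [← hderiv]
  exact intervalIntegral.integral_deriv_eq_sub' _ (funext fun t => Polynomial.deriv _)
    (fun t _ => Polynomial.differentiableAt _) (by fun_prop)

lemma integral_eval_chebyshevU_cos_add_cos_sub (m : ℕ) (u γ : ℝ) :
    ∫ t in cos (u + γ)..cos (u - γ), (U ℝ m).eval t
      = 2 * sin ((m + 1) * u) * sin ((m + 1) * γ) / (m + 1) := by
  have hT : ∀ θ, (T ℝ (m + 1)).eval (cos θ) = cos ((m + 1) * θ) := by
    intro θ
    exact_mod_cast T_real_cos θ (m + 1)
  rw [integral_eval_chebyshevU, hT, hT, cos_sub_cos,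
    show ((m + 1) * (u - γ) + (m + 1) * (u + γ)) / 2 = (m + 1) * u by ring,
    show ((m + 1) * (u - γ) - (m + 1) * (u + γ)) / 2 = -((m + 1) * γ) by ring, sin_neg]
  ring

lemma integral_eval_chebyshevU_along_chord_eq_zero (m : ℕ) {γ : ℝ} (hγ : sin γ ≠ 0)
    (hmγ : sin ((m + 1) * γ) = 0) {x : ℝ} (hx : x ∈ Icc (-1) 1) :
    ∫ y in -√(1 - x ^ 2)..√(1 - x ^ 2), (U ℝ m).eval (x * cos γ + y * sin γ) = 0 := by
  have hcos : cos (arccos x) = x := cos_arccos hx.1 hx.2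
  have hupper : x * cos γ + sin γ * √(1 - x ^ 2) = cos (arccos x - γ) := by
    rw [cos_sub, hcos, sin_arccos]; ring
  have hlower : x * cos γ + sin γ * -√(1 - x ^ 2) = cos (arccos x + γ) := by
    rw [cos_add, hcos, sin_arccos]; ring
  have hsubst := intervalIntegral.smul_integral_comp_add_mul (fun t => (U ℝ m).eval t)
    (a := -√(1 - x ^ 2)) (b := √(1 - x ^ 2)) (sin γ) (x * cos γ)
  rw [hupper, hlower, integral_eval_chebyshevU_cos_add_cos_sub, hmγ, mul_zero, zero_div,
    smul_eq_mul] at hsubst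
  refine (mul_eq_zero.mp ?_).resolve_left hγ
  simpa only [mul_comm (sin γ)] using hsubst

lemma integral_sqrt_one_sub_sq_mul_eval_chebyshevU_sq (m : ℕ) :
    ∫ x in -1..1, √(1 - x ^ 2) * (U ℝ m).eval x ^ 2 = π / 2 := calc
  -- `√a = a * √a⁻¹` for every real `a`: both sides vanish when `a ≤ 0`
  _ = ∫ x in -1..1, (1 - x ^ 2) * (U ℝ m).eval x ^ 2 * √(1 - x ^ 2)⁻¹ := by
    congr 1; funext x
    rw [sqrt_inv, mul_right_comm, ← div_eq_mul_inv, div_sqrt]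
  _ = ∫ θ in 0..π, (1 - cos θ ^ 2) * (U ℝ m).eval (cos θ) ^ 2 := by
    rw [← integral_measureT, integral_measureT_eq_integral_cos]
  _ = ∫ θ in 0..π, sin ((m + 1) * θ) ^ 2 := by
    congr 1; funext θ
    have hU : (U ℝ m).eval (cos θ) * sin θ = sin ((m + 1) * θ) := by exact_mod_cast U_real_cos θ m
    rw [← sin_sq, ← hU]
    ring
  _ = π / 2 := by
    have hm : (m : ℝ) + 1 ≠ 0 := by positivity
    rw [intervalIntegral.integral_comp_mul_left (fun θ => sin θ ^ 2) hm, integral_sin_sq,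
      show ((m : ℝ) + 1) * π = ((m + 1 : ℕ) : ℝ) * π by push_cast; ring, sin_nat_mul_pi]
    simp only [Nat.cast_add, Nat.cast_one, mul_zero, sin_zero, zero_mul, sub_self, zero_add,
      sub_zero, smul_eq_mul]
    field_simp

lemma setIntegral_unitBall_eval_chebyshevU_sq (m : ℕ) :
    ∫ x in Metric.ball (0 : EuclideanSpace ℝ (Fin 2)) 1, (U ℝ m).eval (x 0) ^ 2 = π := by
  rw [setIntegral_unitBall_eq_intervalIntegral (fun s _ => (U ℝ m).eval s ^ 2) (by fun_prop)]
  simp_rw [intervalIntegral.integral_const, smul_eq_mul, sub_neg_eq_add, ← two_mul, mul_assoc,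
    intervalIntegral.integral_const_mul, integral_sqrt_one_sub_sq_mul_eval_chebyshevU_sq]
  ring

lemma setIntegral_unitBall_eval_chebyshevU_mul_ridge_eq_zero (m : ℕ) {γ : ℝ} (hγ : sin γ ≠ 0)
    (hmγ : sin ((m + 1) * γ) = 0) :
    ∫ x in Metric.ball (0 : EuclideanSpace ℝ (Fin 2)) 1,
      (U ℝ m).eval (x 0) * (U ℝ m).eval (x 0 * cos γ + x 1 * sin γ) = 0 := by
  rw [setIntegral_unitBall_eq_intervalIntegral
    (fun s t => (U ℝ m).eval s * (U ℝ m).eval (s * cos γ + t * sin γ)) (by fun_prop)]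
  calc _ = ∫ _ in (-1 : ℝ)..1, (0 : ℝ) := intervalIntegral.integral_congr fun x hx => ?_
    _ = 0 := intervalIntegral.integral_zero
  rw [uIcc_of_le (by norm_num)] at hx
  simp only [intervalIntegral.integral_const_mul,
    integral_eval_chebyshevU_along_chord_eq_zero m hγ hmγ hx, mul_zero]

lemma sin_sub_mul_pi_div_ne_zero {n k l : ℕ} (hk : k < n + 1) (hl : l < n + 1) (hkl : k ≠ l) :
    sin (l * (π / (n + 1)) - k * (π / (n + 1))) ≠ 0 := by
  have hn : (0 : ℝ) < n + 1 := by positivity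
  have hk' : (k : ℝ) < n + 1 := by exact_mod_cast hk
  have hl' : (l : ℝ) < n + 1 := by exact_mod_cast hl
  have hlo : -1 < ((l : ℝ) - k) / (n + 1) := by
    rw [lt_div_iff₀ hn]
    linarith [(Nat.cast_nonneg l : (0 : ℝ) ≤ l), hk']
  have hhi : ((l : ℝ) - k) / (n + 1) < 1 := by
    rw [div_lt_one hn]
    linarith [(Nat.cast_nonneg k : (0 : ℝ) ≤ k), hl']
  have hlk : (l : ℝ) - k ≠ 0 := sub_ne_zero.mpr (by exact_mod_cast hkl.symm)
  rw [show l * (π / (n + 1)) - k * (π / (n + 1)) = ((l : ℝ) - k) / (n + 1) * π by ring, Ne,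
    sin_eq_zero_iff_of_lt_of_lt (by nlinarith [pi_pos]) (by nlinarith [pi_pos])]
  exact mul_ne_zero (div_ne_zero hlk hn.ne') pi_ne_zero

/-- The ridge polynomials `φ̃_{n,k}(x) = (1/√π) U_n(x₁ cos(kh) + x₂ sin(kh))`, `h = π/(n+1)`,
form an orthonormal family in `L²(B_2)`. -/
theorem ridge_polynomials_orthonormal (n : ℕ) :
    ∀ k ∈ Finset.range (n + 1), ∀ l ∈ Finset.range (n + 1),
      (∫ x in Metric.ball (0 : EuclideanSpace ℝ (Fin 2)) 1,
        ((1 / Real.sqrt π) *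
            (Polynomial.Chebyshev.U ℝ n).eval
              (x 0 * Real.cos (k * (π / (n + 1))) + x 1 * Real.sin (k * (π / (n + 1))))) *
        ((1 / Real.sqrt π) *
            (Polynomial.Chebyshev.U ℝ n).eval
              (x 0 * Real.cos (l * (π / (n + 1))) + x 1 * Real.sin (l * (π / (n + 1))))))
      = if k = l then 1 else 0 := by
  intro k hk l hl
  rw [Finset.mem_range] at hk hl
  have hnorm : ∀ a b : ℝ, 1 / √π * a * (1 / √π * b) = π⁻¹ * (a * b) := fun a b => by
    rw [mul_mul_mul_comm, one_div_mul_one_div, mul_self_sqrt pi_pos.le, one_div]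
  simp_rw [hnorm]
  rw [integral_const_mul,
    setIntegral_unitBall_ridge_mul_ridge (fun s t => (U ℝ n).eval s * (U ℝ n).eval t)]
  split_ifs with hkl
  · subst hkl
    simp only [sub_self, cos_zero, sin_zero, mul_one, mul_zero, add_zero, ← sq,
      setIntegral_unitBall_eval_chebyshevU_sq]
    exact inv_mul_cancel₀ pi_ne_zero
  · have hperiod : sin ((n + 1) * (l * (π / (n + 1)) - k * (π / (n + 1)))) = 0 := by
      rw [show (n + 1 : ℝ) * (l * (π / (n + 1)) - k * (π / (n + 1))) = ((l - k : ℤ) : ℝ) * π by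
        push_cast; field_simp]
      exact sin_int_mul_pi _
    rw [setIntegral_unitBall_eval_chebyshevU_mul_ridge_eq_zero n
      (sin_sub_mul_pi_div_ne_zero hk hl hkl) hperiod, mul_zero]
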